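/- Let 0 < α₂ < α₁ ≤ 1 and M₁, M₂ > 0, and set F₁ = F_D(α₁, M₁) and F₂ = F_D(α₂, M₂), with Tf = f(0). Then: (i) for every ε > 0, ω(ε, F₁, F₂) = ω(ε, F₂, F₁); (ii) there exist constants 0 < c ≤ C < ∞ and ε₀ > 0 such that c·ε^{2α₁/(2α₁+1)} ≤ ω(ε, F₁, F₂) ≤ C·ε^{2α₁/(2α₁+1)} for all 0 < ε ≤ ε₀; and (iii) for i = 1, 2 there exist constants 0 < c_i ≤ C_i < ∞ and ε₀ > 0 such that c_i·ε^{2α_i/(2α_i+1)} ≤ ω(ε, F_i) ≤ C_i·ε^{2α_i/(2α_i+1)} for all 0 < ε ≤ ε₀. -/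

import Mathlib

open MeasureTheory ProbabilityTheory Real Filter
open scoped ENNReal NNReal RealInnerProductSpace

noncomputable section

/-- The Hilbert space `H = L²([-1/2, 1/2], ℝ)`. -/
abbrev H : Type :=
  MeasureTheory.Lp (α := ℝ) ℝ 2 (volume.restrict (Set.Icc (-(1:ℝ)/2) (1/2)))

/-- The set of increments `T g - T f` over pairs `f ∈ F`, `g ∈ G` with `‖g - f‖₂ ≤ ε`. -/
def modSet (T : H → ℝ) (F G : Set H) (ε : ℝ) : Set ℝ :=
  {d : ℝ | ∃ f ∈ F, ∃ g ∈ G, ‖g - f‖ ≤ ε ∧ d = T g - T f}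

/-- The ordered modulus of continuity `ω(ε, F, G)`. -/
def omegaMod (T : H → ℝ) (F G : Set H) (ε : ℝ) : ℝ := sSup (modSet T F G ε)

/-- The between-class modulus of continuity `ω₊(ε, F, G)`. -/
def omegaPlus (T : H → ℝ) (F G : Set H) (ε : ℝ) : ℝ :=
  max (omegaMod T F G ε) (omegaMod T G F ε)

/-- All the moduli `ω(ε, F, G)` are finite (the defining suprema are over bounded sets). -/
def FiniteModuli (T : H → ℝ) (F G : Set H) : Prop := ∀ ε : ℝ, BddAbove (modSet T F G ε)

/-- `P` is the law of white-noise data with drift `f` at noise level `n`, in sequence form with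
respect to the orthonormal basis `e`: a probability measure on `ℝ^ℕ` whose finite-dimensional
marginals are products of Gaussians `N(⟪f, e i⟫, 1/n)`. -/
def IsWhiteNoiseLaw (e : ℕ → H) (n : ℕ) (f : H) (P : Measure (ℕ → ℝ)) : Prop :=
  IsProbabilityMeasure P ∧
    ∀ s : Finset ℕ,
      P.map (fun y (i : s) => y i) =
        Measure.pi (fun i : s => gaussianReal ⟪f, e i⟫ (n : ℝ≥0)⁻¹)

/-- The mean squared error `E_f (T̂ - Tf)²` of an estimator `T̂` when the target value is `t`,
as an extended real. -/
def risk (P : Measure (ℕ → ℝ)) (That : (ℕ → ℝ) → ℝ) (t : ℝ) : ℝ≥0∞ :=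
  ∫⁻ y, ENNReal.ofReal ((That y - t) ^ 2) ∂P

/-- The affine estimator `y ↦ a₀ + Σᵢ aᵢ yᵢ`. -/
def affineEst (a0 : ℝ) (a : ℕ → ℝ) (y : ℕ → ℝ) : ℝ := a0 + ∑' i, a i * y i

/-- The variance `(Σᵢ aᵢ²)/n` of an affine estimator under the white-noise law at level `n`. -/
def affineVar (n : ℕ) (a : ℕ → ℝ) : ℝ := (∑' i, a i ^ 2) / n

/-- The mean `a₀ + Σᵢ aᵢ ⟪f, eᵢ⟫` of an affine estimator under `P_f`. -/
def affineMean (e : ℕ → H) (a0 : ℝ) (a : ℕ → ℝ) (f : H) : ℝ := a0 + ∑' i, a i * ⟪f, e i⟫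

/-- The Lipschitz/Hölder class `F(α, M)` of functions on `[-1/2, 1/2]`, viewed as a subset of
`L²([-1/2, 1/2])`: elements admitting a representative `g` with
`|g(x) - g(y)| ≤ M|x - y|^α` on `[-1/2, 1/2]`. -/
def holderClass (α M : ℝ) : Set H :=
  {f : H | ∃ g : ℝ → ℝ,
    (∀ x ∈ Set.Icc (-(1:ℝ)/2) (1/2), ∀ y ∈ Set.Icc (-(1:ℝ)/2) (1/2),
      |g x - g y| ≤ M * |x - y| ^ α) ∧
    ∀ᵐ x ∂(volume.restrict (Set.Icc (-(1:ℝ)/2) (1/2))), f x = g x}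

/-- The class `D` of nonincreasing functions on `[-1/2, 1/2]`, viewed as a subset of
`L²([-1/2, 1/2])`. -/
def decreasingClass : Set H :=
  {f : H | ∃ g : ℝ → ℝ, AntitoneOn g (Set.Icc (-(1:ℝ)/2) (1/2)) ∧
    ∀ᵐ x ∂(volume.restrict (Set.Icc (-(1:ℝ)/2) (1/2))), f x = g x}

/-- The class `F_D(α, M) = F(α, M) ∩ D` of decreasing Hölder functions. -/
def FD (α M : ℝ) : Set H := holderClass α M ∩ decreasingClass

/-!
If `f` is `α`-Hölder with constant `M`, `g` is nonincreasing and `δ = g(0) - f(0)`, then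
`g - f ≥ δ - M s^α` on `[-s, 0]`. Writing `ε = u^{2α+1}` and taking `s = u²/2`, either
`δ ≤ 2M u^{2α}` or `δ² s / 4 ≤ ‖g - f‖² ≤ ε²`, and both give `δ ≲ u^{2α} = ε^{2α/(2α+1)}`.
Only the exponent of `f` enters, hence `α₁` for `ω(ε, F₁, F₂)`. The bound is attained by the ramp
`g(x) = m (t^α - clip_{[0,t]}(x)^α)` and its shift `f = g(· + t)`: they differ only on
`[-t, t]`, by at most `g(0) - f(0) = m t^α`, so `ε² ≍ t^{2α+1}`. The reflection
`φ ↦ (x ↦ -φ(-x))` preserves `F_D(α, M)`, `g(0) - f(0)` and `‖g - f‖` but swaps the roles of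
`f` and `g`, which gives the symmetry.
-/

namespace DecreasingHolder

open Set Topology

abbrev I : Set ℝ := Icc (-(1:ℝ)/2) (1/2)

def HolderOn (α M : ℝ) (φ : ℝ → ℝ) (s : Set ℝ) : Prop :=
  ∀ x ∈ s, ∀ y ∈ s, |φ x - φ y| ≤ M * |x - y| ^ α

def DecHolder (α M : ℝ) (φ : ℝ → ℝ) : Prop :=
  HolderOn α M φ I ∧ AntitoneOn φ I

def IsEvalAtZero (T : H → ℝ) : Prop :=
  ∀ (f : H) (φ : ℝ → ℝ), ContinuousOn φ I → f =ᵐ[volume.restrict I] φ → T f = φ 0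

lemma neg_mem_I {x : ℝ} (hx : x ∈ I) : -x ∈ I :=
  ⟨by linarith [hx.2], by linarith [hx.1]⟩

lemma setIntegral_I_comp_neg (u : ℝ → ℝ) : ∫ x in I, u (-x) = ∫ x in I, u x := by
  have h := (Measure.measurePreserving_neg volume).setIntegral_preimage_emb
    (MeasurableEquiv.neg ℝ).measurableEmbedding u I
  rwa [neg_preimage, neg_Icc, show -(1/2 : ℝ) = -1/2 by norm_num,
    show -(-1/2 : ℝ) = 1/2 by norm_num] at h

lemma abs_rpow_sub_rpow_le {a b p : ℝ} (ha : 0 ≤ a) (hb : 0 ≤ b) (hp : 0 ≤ p)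
    (hp1 : p ≤ 1) :
    |a ^ p - b ^ p| ≤ |a - b| ^ p := by
  wlog hba : b ≤ a generalizing a b
  · rw [abs_sub_comm, abs_sub_comm a]
    exact this hb ha (le_of_not_ge hba)
  have hsub := Real.rpow_add_le_add_rpow (sub_nonneg.2 hba) hb hp hp1
  rw [sub_add_cancel] at hsub
  rw [abs_of_nonneg (sub_nonneg.2 hba), abs_of_nonneg (sub_nonneg.2 (Real.rpow_le_rpow hb hba hp))]
  linarith

lemma sq_rpow {u : ℝ} (hu : 0 ≤ u) (α : ℝ) : (u ^ 2) ^ α = u ^ (2 * α) := by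
  rw [← Real.rpow_natCast, ← Real.rpow_mul hu, Nat.cast_ofNat]

section Holder

variable {α β M N : ℝ} {φ : ℝ → ℝ} {s : Set ℝ}

theorem HolderOn.continuousOn (hα : 0 < α) (h : HolderOn α M φ s) : ContinuousOn φ s := by
  intro x hx
  have hbound : Tendsto (fun y => M * |y - x| ^ α) (𝓝[s] x) (𝓝 0) := by
    have hc : Continuous fun y => M * |y - x| ^ α :=
      continuous_const.mul
        ((continuous_id.sub continuous_const).abs.rpow_const fun _ => Or.inr hα.le)
    simpa [Real.zero_rpow hα.ne'] using (hc.tendsto x).mono_left nhdsWithin_le_nhds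
  rw [ContinuousWithinAt, ← tendsto_sub_nhds_zero_iff]
  exact squeeze_zero_norm' (eventually_nhdsWithin_of_forall fun y hy => h y hy x hx) hbound

theorem HolderOn.of_le (hβ : 0 < β) (hβα : β ≤ α) (hMN : M ≤ N) (hM : 0 ≤ M)
    (h : HolderOn α M φ I) : HolderOn β N φ I := by
  intro x hx y hy
  have hxy : |x - y| ≤ 1 :=
    abs_sub_le_iff.2 ⟨by linarith [hx.2, hy.1], by linarith [hx.1, hy.2]⟩
  calc |φ x - φ y| ≤ M * |x - y| ^ α := h x hx y hy
    _ ≤ N * |x - y| ^ β :=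
      mul_le_mul hMN (Real.rpow_le_rpow_of_exponent_ge' (abs_nonneg _) hxy hβ.le hβα)
        (by positivity) (hM.trans hMN)

theorem DecHolder.comp_neg (h : DecHolder α M φ) : DecHolder α M (fun x => -φ (-x)) :=
  ⟨fun x hx y hy => by simpa only [neg_sub_neg] using h.1 (-y) (neg_mem_I hy) (-x) (neg_mem_I hx),
    fun x hx y hy hxy => neg_le_neg (h.2 (neg_mem_I hy) (neg_mem_I hx) (neg_le_neg hxy))⟩

end Holder

def ramp (α m t x : ℝ) : ℝ := m * (t ^ α - (min (max x 0) t) ^ α)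

section Ramp

variable {α m t : ℝ}

lemma ramp_of_nonpos (hα : α ≠ 0) (ht : 0 ≤ t) {x : ℝ} (hx : x ≤ 0) :
    ramp α m t x = m * t ^ α := by
  simp [ramp, max_eq_right hx, min_eq_left ht, Real.zero_rpow hα]

lemma ramp_of_le (ht : 0 ≤ t) {x : ℝ} (hx : t ≤ x) : ramp α m t x = 0 := by
  simp [ramp, max_eq_left (ht.trans hx), min_eq_right hx]

lemma ramp_antitone (hα : 0 ≤ α) (hm : 0 ≤ m) (ht : 0 ≤ t) : Antitone (ramp α m t) := by
  intro x y hxy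
  have hclip : (min (max x 0) t) ^ α ≤ (min (max y 0) t) ^ α :=
    Real.rpow_le_rpow (le_min (le_max_right _ _) ht)
      (min_le_min_right _ (max_le_max_right _ hxy)) hα
  exact mul_le_mul_of_nonneg_left (sub_le_sub_left hclip _) hm

lemma ramp_nonneg (hα : 0 ≤ α) (hm : 0 ≤ m) (ht : 0 ≤ t) (x : ℝ) : 0 ≤ ramp α m t x :=
  mul_nonneg hm (sub_nonneg.2
    (Real.rpow_le_rpow (le_min (le_max_right _ _) ht) (min_le_right _ _) hα))

lemma ramp_le (hm : 0 ≤ m) (ht : 0 ≤ t) (x : ℝ) : ramp α m t x ≤ m * t ^ α :=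
  mul_le_mul_of_nonneg_left
    (sub_le_self _ (Real.rpow_nonneg (le_min (le_max_right _ _) ht) _)) hm

lemma abs_ramp_sub_ramp_le (hα : 0 < α) (hα1 : α ≤ 1) (hm : 0 ≤ m) (ht : 0 ≤ t)
    (x y : ℝ) :
    |ramp α m t x - ramp α m t y| ≤ m * |x - y| ^ α := by
  have hclip : |min (max y 0) t - min (max x 0) t| ≤ |x - y| :=
    calc |min (max y 0) t - min (max x 0) t| ≤ max |max y 0 - max x 0| |t - t| :=
          abs_min_sub_min_le_max _ _ _ _
      _ ≤ |x - y| := by simpa [abs_sub_comm] using abs_max_sub_max_le_abs y x 0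
  rw [ramp, ramp, ← mul_sub, abs_mul, abs_of_nonneg hm, sub_sub_sub_cancel_left]
  gcongr
  exact (abs_rpow_sub_rpow_le (le_min (le_max_right _ _) ht) (le_min (le_max_right _ _) ht)
    hα.le hα1).trans (Real.rpow_le_rpow (abs_nonneg _) hclip hα.le)

lemma continuous_ramp (hα : 0 < α) (hα1 : α ≤ 1) (hm : 0 ≤ m) (ht : 0 ≤ t) :
    Continuous (ramp α m t) :=
  continuousOn_univ.1 <| HolderOn.continuousOn hα
    fun x _ y _ => abs_ramp_sub_ramp_le hα hα1 hm ht x y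

lemma sq_ramp_sub_ramp_add_le (hα : 0 < α) (hm : 0 ≤ m) (ht : 0 ≤ t) (x : ℝ) :
    (ramp α m t x - ramp α m t (x + t)) ^ 2 ≤
      (Icc (-t) t).indicator (fun _ => (m * t ^ α) ^ 2) x := by
  by_cases hx : x ∈ Icc (-t) t
  · rw [indicator_of_mem hx]
    have hmono : ramp α m t (x + t) ≤ ramp α m t x := ramp_antitone hα.le hm ht (by linarith)
    have hshift := ramp_nonneg hα.le hm ht (x + t)
    have hmax := ramp_le (α := α) hm ht x
    nlinarith
  · rw [indicator_of_notMem hx]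
    rcases not_and_or.1 hx with hx | hx
    · rw [ramp_of_nonpos hα.ne' ht (by linarith), ramp_of_nonpos hα.ne' ht (by linarith)]
      simp
    · rw [ramp_of_le ht (by linarith), ramp_of_le ht (by linarith)]
      simp

lemma setIntegral_sq_ramp_sub_ramp_add_le (hα : 0 < α) (hα1 : α ≤ 1) (hm : 0 ≤ m)
    (ht : 0 ≤ t) :
    ∫ x in I, (ramp α m t x - ramp α m t (x + t)) ^ 2 ≤ 2 * t * (m * t ^ α) ^ 2 := by
  have hc := continuous_ramp hα hα1 hm ht
  have hint : Continuous fun x => (ramp α m t x - ramp α m t (x + t)) ^ 2 := by fun_prop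
  calc ∫ x in I, (ramp α m t x - ramp α m t (x + t)) ^ 2
      ≤ ∫ x in I, (Icc (-t) t).indicator (fun _ => (m * t ^ α) ^ 2) x :=
        integral_mono hint.integrableOn_Icc
          ((integrable_const _).indicator measurableSet_Icc) (sq_ramp_sub_ramp_add_le hα hm ht)
    _ = (volume.restrict I).real (Icc (-t) t) * (m * t ^ α) ^ 2 := by
        rw [integral_indicator_const _ measurableSet_Icc, smul_eq_mul]
    _ ≤ volume.real (Icc (-t) t) * (m * t ^ α) ^ 2 := by
        gcongr
        rw [measureReal_restrict_apply measurableSet_Icc]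
        exact measureReal_mono inter_subset_left measure_Icc_lt_top.ne
    _ = 2 * t * (m * t ^ α) ^ 2 := by
        rw [Real.volume_real_Icc, max_eq_left (by linarith)]
        ring

end Ramp

section Representatives

variable {α αA αB M MA MB ε d : ℝ} {T : H → ℝ}

lemma exists_eq_of_ae_eq {a b u v : ℝ} {φ ψ : ℝ → ℝ} (huv : u < v)
    (hsub : Ioo u v ⊆ Icc a b)
    (h : φ =ᵐ[volume.restrict (Icc a b)] ψ) : ∃ w ∈ Ioo u v, φ w = ψ w := by
  have : (ae (volume.restrict (Ioo u v))).NeBot := ae_restrict_neBot.2 (by simp [huv])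
  exact ((ae_restrict_mem measurableSet_Ioo).and
    (ae_restrict_of_ae_restrict_of_subset hsub h)).exists

theorem antitoneOn_of_continuousOn_of_ae_eq {a b : ℝ} {φ ψ : ℝ → ℝ}
    (hφ : ContinuousOn φ (Icc a b)) (hψ : AntitoneOn ψ (Icc a b))
    (h : φ =ᵐ[volume.restrict (Icc a b)] ψ) : AntitoneOn φ (Icc a b) := by
  intro x hx y hy hxy
  rcases hxy.eq_or_lt with rfl | hxy
  · rfl
  -- `φ y ≈ φ v = ψ v ≤ ψ u = φ u ≈ φ x` at points `u < v` near `x` and `y` where `φ = ψ`.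
  refine le_of_forall_pos_lt_add fun η hη => ?_
  obtain ⟨r, hr, hφx⟩ := Metric.continuousWithinAt_iff.1 (hφ x hx) (η / 2) (half_pos hη)
  obtain ⟨r', hr', hφy⟩ := Metric.continuousWithinAt_iff.1 (hφ y hy) (η / 2) (half_pos hη)
  have hsub : ∀ {u v}, x ≤ u → v ≤ y → Ioo u v ⊆ Icc a b := fun hu hv z hz =>
    ⟨by linarith [hx.1, hz.1], by linarith [hy.2, hz.2]⟩
  obtain ⟨u, ⟨hxu, hu⟩, hφu⟩ := exists_eq_of_ae_eq
    (lt_min (by linarith) (by linarith) : x < min (x + r) ((x + y) / 2))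
    (hsub le_rfl ((min_le_right _ _).trans (by linarith))) h
  obtain ⟨v, ⟨hv, hvy⟩, hφv⟩ := exists_eq_of_ae_eq
    (max_lt (by linarith) (by linarith) : max (y - r') ((x + y) / 2) < y)
    (hsub ((by linarith : x ≤ (x + y) / 2).trans (le_max_right _ _)) le_rfl) h
  rw [lt_min_iff] at hu
  rw [max_lt_iff] at hv
  have huI : u ∈ Icc a b := ⟨by linarith [hx.1], by linarith [hy.2]⟩
  have hvI : v ∈ Icc a b := ⟨by linarith [hx.1], by linarith [hy.2]⟩
  have hu' := hφx huI (by rw [Real.dist_eq, abs_of_pos (by linarith)]; linarith)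
  have hv' := hφy hvI (by rw [Real.dist_eq, abs_of_neg (by linarith)]; linarith)
  have hψuv : ψ v ≤ ψ u := hψ huI hvI (by linarith)
  rw [Real.dist_eq, abs_lt] at hu' hv'
  linarith

lemma memLp_two_of_continuousOn {φ : ℝ → ℝ} (h : ContinuousOn φ I) :
    MemLp φ 2 (volume.restrict I) := by
  obtain ⟨C, hC⟩ := isCompact_Icc.exists_bound_of_continuousOn h
  exact MemLp.of_bound (h.aestronglyMeasurable measurableSet_Icc) C
    ((ae_restrict_iff' measurableSet_Icc).2 (ae_of_all _ hC))

lemma norm_sub_sq_eq_setIntegral {f g : H} {φ ψ : ℝ → ℝ} (hf : f =ᵐ[volume.restrict I] φ)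
    (hg : g =ᵐ[volume.restrict I] ψ) : ‖g - f‖ ^ 2 = ∫ x in I, (ψ x - φ x) ^ 2 := by
  rw [← real_inner_self_eq_norm_sq, L2.inner_def]
  refine integral_congr_ae ?_
  filter_upwards [Lp.coeFn_sub g f, hf, hg] with x hsub hfx hgx
  rw [real_inner_self_eq_norm_sq, hsub, Pi.sub_apply, hfx, hgx, Real.norm_eq_abs, sq_abs]

theorem mem_FD_iff (hα : 0 < α) {f : H} :
    f ∈ FD α M ↔ ∃ φ, DecHolder α M φ ∧ f =ᵐ[volume.restrict I] φ := by
  refine ⟨?_, fun ⟨φ, hφ, hf⟩ => ⟨⟨φ, hφ.1, hf⟩, φ, hφ.2, hf⟩⟩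
  rintro ⟨⟨φ, hφ, hfφ⟩, ψ, hψ, hfψ⟩
  refine ⟨φ, ⟨hφ, antitoneOn_of_continuousOn_of_ae_eq (HolderOn.continuousOn hα hφ) hψ ?_⟩,
    hfφ⟩
  filter_upwards [hfφ, hfψ] with x h1 h2
  rw [← h1, h2]

theorem mem_modSet_FD_iff (hαA : 0 < αA) (hαB : 0 < αB) (hT : IsEvalAtZero T) (hε : 0 ≤ ε) :
    d ∈ modSet T (FD αA MA) (FD αB MB) ε ↔
      ∃ φ ψ, DecHolder αA MA φ ∧ DecHolder αB MB ψ ∧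
        ∫ x in I, (ψ x - φ x) ^ 2 ≤ ε ^ 2 ∧ d = ψ 0 - φ 0 := by
  constructor
  · rintro ⟨f, hf, g, hg, hfg, rfl⟩
    obtain ⟨φ, hφ, hfφ⟩ := (mem_FD_iff hαA).1 hf
    obtain ⟨ψ, hψ, hgψ⟩ := (mem_FD_iff hαB).1 hg
    refine ⟨φ, ψ, hφ, hψ, ?_, ?_⟩
    · rw [← norm_sub_sq_eq_setIntegral hfφ hgψ]
      gcongr
    · rw [hT f φ (hφ.1.continuousOn hαA) hfφ, hT g ψ (hψ.1.continuousOn hαB) hgψ]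
  · rintro ⟨φ, ψ, hφ, hψ, hint, rfl⟩
    have hφc := hφ.1.continuousOn hαA
    have hψc := hψ.1.continuousOn hαB
    set f : H := (memLp_two_of_continuousOn hφc).toLp φ
    set g : H := (memLp_two_of_continuousOn hψc).toLp ψ
    have hf : f =ᵐ[volume.restrict I] φ := MemLp.coeFn_toLp _
    have hg : g =ᵐ[volume.restrict I] ψ := MemLp.coeFn_toLp _
    refine ⟨f, (mem_FD_iff hαA).2 ⟨φ, hφ, hf⟩, g, (mem_FD_iff hαB).2 ⟨ψ, hψ, hg⟩, ?_, ?_⟩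
    · rw [← sq_le_sq₀ (norm_nonneg _) hε, norm_sub_sq_eq_setIntegral hf hg]
      exact hint
    · rw [hT f φ hφc hf, hT g ψ hψc hg]

end Representatives

section Moduli

variable {αA αB MA MB ε u d : ℝ} {T : H → ℝ}

theorem modSet_FD_subset_swap (hαA : 0 < αA) (hαB : 0 < αB) (hT : IsEvalAtZero T)
    (hε : 0 ≤ ε) :
    modSet T (FD αA MA) (FD αB MB) ε ⊆ modSet T (FD αB MB) (FD αA MA) ε := by
  intro d hd
  obtain ⟨φ, ψ, hφ, hψ, hint, rfl⟩ := (mem_modSet_FD_iff hαA hαB hT hε).1 hd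
  refine (mem_modSet_FD_iff hαB hαA hT hε).2
    ⟨fun x => -ψ (-x), fun x => -φ (-x), hψ.comp_neg, hφ.comp_neg, ?_, by simp only [neg_zero]; ring⟩
  have hreflect : ∫ x in I, (-φ (-x) - -ψ (-x)) ^ 2 = ∫ x in I, (ψ x - φ x) ^ 2 := by
    simp only [neg_sub_neg]
    exact setIntegral_I_comp_neg fun x => (ψ x - φ x) ^ 2
  exact hreflect.trans_le hint

lemma sq_mul_le_setIntegral_sq {h : ℝ → ℝ} {s : Set ℝ} {a b c : ℝ} (hab : a ≤ b)
    (hsub : Icc a b ⊆ s) (hh : IntegrableOn (fun x => h x ^ 2) s) (hc : 0 ≤ c)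
    (hch : ∀ x ∈ Icc a b, c ≤ h x) : c ^ 2 * (b - a) ≤ ∫ x in s, h x ^ 2 := by
  calc c ^ 2 * (b - a) = ∫ _ in Icc a b, c ^ 2 := by
        rw [setIntegral_const, Real.volume_real_Icc, max_eq_left (by linarith), smul_eq_mul,
          mul_comm]
    _ ≤ ∫ x in Icc a b, h x ^ 2 :=
        setIntegral_mono_on (integrableOn_const measure_Icc_lt_top.ne) (hh.mono_set hsub)
          measurableSet_Icc fun x hx => pow_le_pow_left₀ hc (hch x hx) 2
    _ ≤ ∫ x in s, h x ^ 2 :=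
        setIntegral_mono_set hh (ae_of_all _ fun x => sq_nonneg _) hsub.eventuallyLE

theorem sub_le_of_setIntegral_sq_le {α M : ℝ} {φ ψ : ℝ → ℝ} (hα : 0 < α) (hM : 0 ≤ M)
    (hφ : HolderOn α M φ I) (hψ : AntitoneOn ψ I) (hψc : ContinuousOn ψ I)
    (hu : 0 < u) (hu1 : u ≤ 1) (hint : ∫ x in I, (ψ x - φ x) ^ 2 ≤ (u ^ (2 * α + 1)) ^ 2) :
    ψ 0 - φ 0 ≤ max (2 * M) 3 * u ^ (2 * α) := by
  set δ := ψ 0 - φ 0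
  have hw : 0 < u ^ (2 * α) := Real.rpow_pos_of_pos hu _
  rcases le_or_gt δ (2 * M * u ^ (2 * α)) with hδ | hδ
  · exact hδ.trans (by gcongr; exact le_max_left _ _)
  have h0 : (0 : ℝ) ∈ I := ⟨by norm_num, by norm_num⟩
  have hsub : Icc (-(u ^ 2 / 2)) 0 ⊆ I := fun x hx =>
    ⟨by nlinarith [hx.1], by linarith [hx.2]⟩
  have hgap : ∀ x ∈ Icc (-(u ^ 2 / 2)) 0, δ / 2 ≤ ψ x - φ x := by
    intro x hx
    have hψx : ψ 0 ≤ ψ x := hψ (hsub hx) h0 hx.2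
    have hxα : |x - 0| ^ α ≤ u ^ (2 * α) := by
      rw [← sq_rpow hu.le]
      refine Real.rpow_le_rpow (abs_nonneg _) ?_ hα.le
      rw [sub_zero, abs_of_nonpos hx.2]
      nlinarith [hx.1]
    have hφx := (abs_le.1 (hφ x (hsub hx) 0 h0)).2
    nlinarith [mul_le_mul_of_nonneg_left hxα hM]
  have hMw : 0 ≤ 2 * M * u ^ (2 * α) := by positivity
  have hlow := sq_mul_le_setIntegral_sq (h := fun x => ψ x - φ x) (neg_nonpos.2 (by positivity))
    hsub (((hψc.sub (hφ.continuousOn hα)).pow 2).integrableOn_compact isCompact_Icc)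
    (by linarith) hgap
  rw [Real.rpow_add_one hu.ne'] at hint
  have hδu : δ ^ 2 * u ^ 2 ≤ 8 * (u ^ (2 * α)) ^ 2 * u ^ 2 := by nlinarith
  have hδ3 : δ ≤ 3 * u ^ (2 * α) := by nlinarith [le_of_mul_le_mul_right hδu (by positivity)]
  exact hδ3.trans (by gcongr; exact le_max_right _ _)

theorem mem_modSet_FD_ramp (hαB : 0 < αB) (hBA : αB ≤ αA) (hαA1 : αA ≤ 1) (hMA : 0 < MA)
    (hMB : 0 < MB) (hT : IsEvalAtZero T) (hu : 0 < u) :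
    min (min MA MB) (1 / 2) * u ^ (2 * αA) ∈
      modSet T (FD αA MA) (FD αB MB) (u ^ (2 * αA + 1)) := by
  have hαA : 0 < αA := hαB.trans_le hBA
  -- `m ≤ 1 / 2` makes the ramp pair with `t = u²` fit in the ball of radius `u^{2αA+1}`.
  set m := min (min MA MB) (1 / 2)
  have hm : 0 < m := lt_min (lt_min hMA hMB) one_half_pos
  have hmA : m ≤ MA := (min_le_left _ _).trans (min_le_left _ _)
  have hmB : m ≤ MB := (min_le_left _ _).trans (min_le_right _ _)
  have hm2 : m ≤ 1 / 2 := min_le_right _ _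
  have ht : 0 ≤ u ^ 2 := sq_nonneg u
  have hholder x y := abs_ramp_sub_ramp_le hαA hαA1 hm.le ht x y
  have hanti := ramp_antitone hαA.le hm.le ht
  have hshift : HolderOn αA MA (fun x => ramp αA m (u ^ 2) (x + u ^ 2)) I := fun x _ y _ => by
    have h := hholder (x + u ^ 2) (y + u ^ 2)
    rw [add_sub_add_right_eq_sub] at h
    exact h.trans (mul_le_mul_of_nonneg_right hmA (by positivity))
  refine (mem_modSet_FD_iff hαA hαB hT (by positivity)).2
    ⟨fun x => ramp αA m (u ^ 2) (x + u ^ 2), ramp αA m (u ^ 2),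
      ⟨hshift, (hanti.comp_monotone (monotone_id.add_const _)).antitoneOn _⟩,
      ⟨HolderOn.of_le hαB hBA hmB hm.le fun x _ y _ => hholder x y, hanti.antitoneOn _⟩,
      ?_, ?_⟩
  · have hslack : 0 ≤ (1 - 2 * m ^ 2) * ((u ^ (2 * αA)) ^ 2 * u ^ 2) :=
      mul_nonneg (by nlinarith) (by positivity)
    calc ∫ x in I, (ramp αA m (u ^ 2) x - ramp αA m (u ^ 2) (x + u ^ 2)) ^ 2
        ≤ 2 * u ^ 2 * (m * (u ^ 2) ^ αA) ^ 2 :=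
          setIntegral_sq_ramp_sub_ramp_add_le hαA hαA1 hm.le ht
      _ ≤ (u ^ (2 * αA + 1)) ^ 2 := by
          rw [sq_rpow hu.le, Real.rpow_add_one hu.ne']
          nlinarith
  · show _ = ramp αA m (u ^ 2) 0 - ramp αA m (u ^ 2) (0 + u ^ 2)
    rw [zero_add, ramp_of_le ht le_rfl, ramp_of_nonpos hαA.ne' ht le_rfl, sq_rpow hu.le, sub_zero]

theorem le_of_mem_modSet_FD (hαA : 0 < αA) (hαB : 0 < αB) (hMA : 0 ≤ MA) (hT : IsEvalAtZero T)
    (hu : 0 < u) (hu1 : u ≤ 1) (hd : d ∈ modSet T (FD αA MA) (FD αB MB) (u ^ (2 * αA + 1))) :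
    d ≤ max (2 * MA) 3 * u ^ (2 * αA) := by
  obtain ⟨φ, ψ, hφ, hψ, hint, rfl⟩ := (mem_modSet_FD_iff hαA hαB hT (by positivity)).1 hd
  exact sub_le_of_setIntegral_sq_le hαA hMA hφ.1 hψ.2 (hψ.1.continuousOn hαB) hu hu1 hint

theorem omegaMod_FD_comm (hαA : 0 < αA) (hαB : 0 < αB) (hT : IsEvalAtZero T) (hε : 0 ≤ ε) :
    omegaMod T (FD αA MA) (FD αB MB) ε = omegaMod T (FD αB MB) (FD αA MA) ε :=
  congrArg sSup ((modSet_FD_subset_swap hαA hαB hT hε).antisymm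
    (modSet_FD_subset_swap hαB hαA hT hε))

theorem omegaMod_FD_asymp (hαB : 0 < αB) (hBA : αB ≤ αA) (hαA1 : αA ≤ 1) (hMA : 0 < MA)
    (hMB : 0 < MB) (hT : IsEvalAtZero T) :
    ∃ c C ε₀ : ℝ, 0 < c ∧ c ≤ C ∧ 0 < ε₀ ∧ ∀ ε : ℝ, 0 < ε → ε ≤ ε₀ →
      c * ε ^ (2 * αA / (2 * αA + 1)) ≤ omegaMod T (FD αA MA) (FD αB MB) ε ∧
        omegaMod T (FD αA MA) (FD αB MB) ε ≤ C * ε ^ (2 * αA / (2 * αA + 1)) := by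
  have hαA : 0 < αA := hαB.trans_le hBA
  refine ⟨min (min MA MB) (1 / 2), max (2 * MA) 3, 1, lt_min (lt_min hMA hMB) one_half_pos,
    ((min_le_right _ _).trans (by norm_num)).trans (le_max_right _ _), one_pos,
    fun ε hε hε1 => ?_⟩
  set u := ε ^ (2 * αA + 1)⁻¹
  have hu : 0 < u := Real.rpow_pos_of_pos hε _
  have hu1 : u ≤ 1 := Real.rpow_le_one hε.le hε1 (by positivity)
  have hεu : u ^ (2 * αA + 1) = ε := Real.rpow_inv_rpow hε.le (by positivity)
  have hεq : u ^ (2 * αA) = ε ^ (2 * αA / (2 * αA + 1)) := by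
    rw [← Real.rpow_mul hε.le, inv_mul_eq_div]
  rw [← hεq, ← hεu]
  have hmem := mem_modSet_FD_ramp hαB hBA hαA1 hMA hMB hT hu
  have hub : ∀ d ∈ modSet T (FD αA MA) (FD αB MB) (u ^ (2 * αA + 1)),
      d ≤ max (2 * MA) 3 * u ^ (2 * αA) := fun d hd =>
    le_of_mem_modSet_FD hαA hαB hMA.le hT hu hu1 hd
  exact ⟨le_csSup ⟨_, hub⟩ hmem, csSup_le ⟨_, hmem⟩ hub⟩

end Moduli

end DecreasingHolder

open DecreasingHolder in
/-- Example 1: for `T f = f(0)`, `F₁ = F_D(α₁, M₁)` and `F₂ = F_D(α₂, M₂)` with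
`0 < α₂ < α₁ ≤ 1`: (i) `ω(ε, F₁, F₂) = ω(ε, F₂, F₁)`; (ii) both are `≍ ε^{2α₁/(2α₁+1)}`;
(iii) `ω(ε, F_i) ≍ ε^{2α_i/(2α_i+1)}` for `i = 1, 2`. -/
theorem example1_decreasing_holder_moduli
    (α₁ α₂ M₁ M₂ : ℝ) (hα₂ : 0 < α₂) (hαlt : α₂ < α₁) (hα₁ : α₁ ≤ 1)
    (hM₁ : 0 < M₁) (hM₂ : 0 < M₂)
    (T : H → ℝ)
    (hT : ∀ (f : H) (g : ℝ → ℝ), ContinuousOn g (Set.Icc (-(1:ℝ)/2) (1/2)) →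
      (∀ᵐ x ∂(volume.restrict (Set.Icc (-(1:ℝ)/2) (1/2))), f x = g x) → T f = g 0) :
    (∀ ε : ℝ, 0 < ε →
      omegaMod T (FD α₁ M₁) (FD α₂ M₂) ε = omegaMod T (FD α₂ M₂) (FD α₁ M₁) ε) ∧
    (∃ c C ε₀ : ℝ, 0 < c ∧ c ≤ C ∧ 0 < ε₀ ∧ ∀ ε : ℝ, 0 < ε → ε ≤ ε₀ →
      c * ε ^ (2 * α₁ / (2 * α₁ + 1)) ≤ omegaMod T (FD α₁ M₁) (FD α₂ M₂) ε ∧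
        omegaMod T (FD α₁ M₁) (FD α₂ M₂) ε ≤ C * ε ^ (2 * α₁ / (2 * α₁ + 1))) ∧
    (∃ c C ε₀ : ℝ, 0 < c ∧ c ≤ C ∧ 0 < ε₀ ∧ ∀ ε : ℝ, 0 < ε → ε ≤ ε₀ →
      c * ε ^ (2 * α₁ / (2 * α₁ + 1)) ≤ omegaMod T (FD α₁ M₁) (FD α₁ M₁) ε ∧
        omegaMod T (FD α₁ M₁) (FD α₁ M₁) ε ≤ C * ε ^ (2 * α₁ / (2 * α₁ + 1))) ∧
    (∃ c C ε₀ : ℝ, 0 < c ∧ c ≤ C ∧ 0 < ε₀ ∧ ∀ ε : ℝ, 0 < ε → ε ≤ ε₀ →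
      c * ε ^ (2 * α₂ / (2 * α₂ + 1)) ≤ omegaMod T (FD α₂ M₂) (FD α₂ M₂) ε ∧
        omegaMod T (FD α₂ M₂) (FD α₂ M₂) ε ≤ C * ε ^ (2 * α₂ / (2 * α₂ + 1))) := by
  have hα₁pos : 0 < α₁ := hα₂.trans hαlt
  exact ⟨fun ε hε => omegaMod_FD_comm hα₁pos hα₂ hT hε.le,
    omegaMod_FD_asymp hα₂ hαlt.le hα₁ hM₁ hM₂ hT,
    omegaMod_FD_asymp hα₁pos le_rfl hα₁ hM₁ hM₁ hT,
    omegaMod_FD_asymp hα₂ le_rfl (hαlt.le.trans hα₁) hM₂ hM₂ hT⟩
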